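/- With ρ = [[ρ₀,0],[0,0]] (ρ₀ positive definite) and σ = [[σ₀,α],[α*,β]] positive semidefinite with σ₀ positive definite, the absolutely continuous part σᵃ = [[σ₀, α],[α*, α* σ₀⁻¹ α]] satisfies σᵃ = R ρ R for the positive semidefinite operator R = E* [[σ₀ # ρ₀⁻¹, 0],[0, 0]] E, where E = [[I, σ₀⁻¹α],[0, I]]; in particular σᵃ ≪ ρ. -/

import Mathlib

/-!
The geometric mean `G = σ₀ # ρ₀⁻¹` is the positive solution of the Riccati equation
`G ρ₀ G = σ₀`: with `S = √σ₀` and `M = √(S⁻¹ ρ₀⁻¹ S⁻¹)` one has `ρ₀⁻¹ = (S M)(M S)`, so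
`G ρ₀ G = S M S (M S)⁻¹ (S M)⁻¹ S M S = S²`. The shear `E` fixes `ρ`, i.e. `E ρ E* = ρ`, and
`E* [[σ₀, 0], [0, 0]] E = σᵃ` is the block LDL factorization of `σᵃ`. Hence, with
`D = [[G, 0], [0, 0]]`, `R ρ R = E* D (E ρ E*) D E = E* [[G ρ₀ G, 0], [0, 0]] E = σᵃ`.
-/

open Matrix
open scoped ComplexOrder

/-- The positive semidefinite square root of a positive semidefinite matrix
(junk value `0` on non-positive-semidefinite input). -/
noncomputable def msqrt {n : ℕ} (A : Matrix (Fin n) (Fin n) ℂ) : Matrix (Fin n) (Fin n) ℂ :=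
  letI := Classical.propDecidable A.PosSemidef
  if h : A.PosSemidef then
    (h.1.eigenvectorUnitary : Matrix (Fin n) (Fin n) ℂ) *
      diagonal ((↑) ∘ (√·) ∘ h.1.eigenvalues) *
      (star h.1.eigenvectorUnitary : Matrix (Fin n) (Fin n) ℂ)
  else 0

/-- The operator geometric mean `A # B = √A √(√A⁻¹ B √A⁻¹) √A`. -/
noncomputable def geomMean {n : ℕ} (A B : Matrix (Fin n) (Fin n) ℂ) :
    Matrix (Fin n) (Fin n) ℂ :=
  msqrt A * msqrt (msqrt A⁻¹ * B * msqrt A⁻¹) * msqrt A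

/-- The block matrix `E = [[I, σ₀⁻¹ α],[0, I]]`. -/
noncomputable def Eblock {m k : ℕ} (σ₀ : Matrix (Fin m) (Fin m) ℂ)
    (α : Matrix (Fin m) (Fin k) ℂ) : Matrix (Fin m ⊕ Fin k) (Fin m ⊕ Fin k) ℂ :=
  fromBlocks 1 (σ₀⁻¹ * α) 0 1

/-- The operator `R = E* [[σ₀ # ρ₀⁻¹, 0],[0,0]] E`. -/
noncomputable def Rop {m k : ℕ} (ρ₀ σ₀ : Matrix (Fin m) (Fin m) ℂ)
    (α : Matrix (Fin m) (Fin k) ℂ) : Matrix (Fin m ⊕ Fin k) (Fin m ⊕ Fin k) ℂ :=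
  (Eblock σ₀ α)ᴴ * fromBlocks (geomMean σ₀ ρ₀⁻¹) 0 0 0 * Eblock σ₀ α

open scoped MatrixOrder

theorem mul_mul_mul_inv_mul_mul_mul {n K : Type*} [Fintype n] [DecidableEq n] [CommRing K]
    {S M B : Matrix n n K} (hS : IsUnit S) (hM : IsUnit M) (h : S * M * M * S = B) :
    S * M * S * B⁻¹ * (S * M * S) = S * S := by
  have hSM : IsUnit (S * M) := hS.mul hM
  have hMS : IsUnit (M * S) := hM.mul hS
  rw [isUnit_iff_isUnit_det] at hSM hMS
  calc S * M * S * B⁻¹ * (S * M * S)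
      = S * ((M * S) * (M * S)⁻¹) * ((S * M)⁻¹ * (S * M)) * S := by
        rw [← h, show S * M * M * S = (S * M) * (M * S) by noncomm_ring, Matrix.mul_inv_rev]
        simp only [Matrix.mul_assoc]
    _ = S * S := by
        rw [Matrix.mul_nonsing_inv _ hMS, Matrix.nonsing_inv_mul _ hSM, Matrix.mul_one,
          Matrix.mul_one]

section GeomMean

variable {n : ℕ} {A B : Matrix (Fin n) (Fin n) ℂ}

theorem msqrt_eq_cfcSqrt (hA : A.PosSemidef) : msqrt A = CFC.sqrt A := by
  rw [CFC.sqrt_eq_cfc, cfc_nnreal_eq_real _ A hA.nonneg, hA.1.cfc_eq]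
  simp only [msqrt, dif_pos hA, IsHermitian.cfc, Unitary.conjStarAlgAut_apply, Real.coe_sqrt,
    Real.coe_toNNReal', Function.comp_def, max_eq_left (hA.eigenvalues_nonneg _)]
  rfl

theorem msqrt_mul_msqrt (hA : A.PosSemidef) : msqrt A * msqrt A = A := by
  rw [msqrt_eq_cfcSqrt hA]
  exact CFC.sqrt_mul_sqrt_self A hA.nonneg

theorem posDef_msqrt (hA : A.PosDef) : (msqrt A).PosDef := by
  rw [msqrt_eq_cfcSqrt hA.posSemidef]
  exact (hA.isStrictlyPositive.sqrt A).posDef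

theorem msqrt_inv (hA : A.PosSemidef) : msqrt A⁻¹ = (msqrt A)⁻¹ := by
  rw [msqrt_eq_cfcSqrt hA.inv, msqrt_eq_cfcSqrt hA, hA.inv_sqrt]

theorem geomMean_eq (hA : A.PosDef) :
    geomMean A B = msqrt A * msqrt ((msqrt A)⁻¹ * B * (msqrt A)⁻¹) * msqrt A := by
  rw [geomMean, msqrt_inv hA.posSemidef]

theorem posDef_inv_msqrt_mul_mul_inv_msqrt (hA : A.PosDef) (hB : B.PosDef) :
    ((msqrt A)⁻¹ * B * (msqrt A)⁻¹).PosDef := by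
  have hS := (posDef_msqrt hA).inv
  simpa only [hS.1.eq] using hB.conjTranspose_mul_mul_same (mulVec_injective_of_isUnit hS.isUnit)

theorem posDef_geomMean (hA : A.PosDef) (hB : B.PosDef) : (geomMean A B).PosDef := by
  have hS := posDef_msqrt hA
  have hM := posDef_msqrt (posDef_inv_msqrt_mul_mul_inv_msqrt hA hB)
  rw [geomMean_eq hA]
  nth_rewrite 1 [← hS.1.eq]
  exact hM.conjTranspose_mul_mul_same (mulVec_injective_of_isUnit hS.isUnit)

theorem geomMean_mul_inv_mul_geomMean (hA : A.PosDef) (hB : B.PosDef) :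
    geomMean A B * B⁻¹ * geomMean A B = A := by
  have hS := posDef_msqrt hA
  have hN := posDef_inv_msqrt_mul_mul_inv_msqrt hA hB
  rw [geomMean_eq hA, mul_mul_mul_inv_mul_mul_mul hS.isUnit (posDef_msqrt hN).isUnit,
    msqrt_mul_msqrt hA.posSemidef]
  have hdet := (isUnit_iff_isUnit_det _).1 hS.isUnit
  rw [Matrix.mul_assoc (msqrt A), msqrt_mul_msqrt hN.posSemidef]
  simp only [Matrix.mul_assoc, Matrix.nonsing_inv_mul _ hdet, Matrix.mul_one,
    Matrix.mul_nonsing_inv_cancel_left _ _ hdet]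

end GeomMean

section Blocks

variable {m n R : Type*} [Fintype m] [Fintype n] [DecidableEq m]

theorem fromBlocks_one_mul_fromBlocks_zero_mul_conjTranspose [DecidableEq n] [Semiring R]
    [StarRing R] (X : Matrix m n R) (P : Matrix m m R) :
    fromBlocks (1 : Matrix m m R) X 0 1 * fromBlocks P 0 0 (0 : Matrix n n R) *
      (fromBlocks 1 X 0 1)ᴴ = fromBlocks P 0 0 0 := by
  simp [fromBlocks_conjTranspose, fromBlocks_multiply]

theorem Matrix.PosDef.posSemidef_fromBlocks_zero [RCLike R] {G : Matrix m m R} (hG : G.PosDef) :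
    (fromBlocks G 0 0 (0 : Matrix n n R)).PosSemidef := by
  have := hG.isUnit.invertible
  simpa using (PosDef.fromBlocks₁₁ (0 : Matrix m n R) 0 hG).2 (by simpa using PosSemidef.zero)

end Blocks

theorem conjTranspose_Eblock_mul_fromBlocks_mul_Eblock {m k : ℕ} {σ₀ : Matrix (Fin m) (Fin m) ℂ}
    (α : Matrix (Fin m) (Fin k) ℂ) (hσ₀ : σ₀.IsHermitian) (hdet : IsUnit σ₀.det) :
    (Eblock σ₀ α)ᴴ * fromBlocks σ₀ 0 0 0 * Eblock σ₀ α =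
      fromBlocks σ₀ α αᴴ (αᴴ * σ₀⁻¹ * α) := by
  have hσ₀inv : σ₀⁻¹ᴴ = σ₀⁻¹ := by rw [conjTranspose_nonsing_inv, hσ₀.eq]
  simp [Eblock, fromBlocks_conjTranspose, fromBlocks_multiply, hσ₀inv,
    Matrix.mul_nonsing_inv_cancel_left _ _ hdet, Matrix.nonsing_inv_mul _ hdet, Matrix.mul_assoc]

theorem ac_part_eq_conj_general {m k : ℕ}
    (ρ₀ σ₀ : Matrix (Fin m) (Fin m) ℂ) (α : Matrix (Fin m) (Fin k) ℂ)
    (hρ₀ : ρ₀.PosDef) (hσ₀ : σ₀.PosDef) :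
    (Rop ρ₀ σ₀ α).PosSemidef ∧
    fromBlocks σ₀ α αᴴ (αᴴ * σ₀⁻¹ * α) =
      Rop ρ₀ σ₀ α * fromBlocks ρ₀ 0 0 0 * Rop ρ₀ σ₀ α := by
  have hρ₀det := (isUnit_iff_isUnit_det _).1 hρ₀.isUnit
  have hσ₀det := (isUnit_iff_isUnit_det _).1 hσ₀.isUnit
  have hG := posDef_geomMean hσ₀ hρ₀.inv
  have hGρG : geomMean σ₀ ρ₀⁻¹ * ρ₀ * geomMean σ₀ ρ₀⁻¹ = σ₀ := by
    simpa only [Matrix.nonsing_inv_nonsing_inv _ hρ₀det] using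
      geomMean_mul_inv_mul_geomMean hσ₀ hρ₀.inv
  refine ⟨hG.posSemidef_fromBlocks_zero.conjTranspose_mul_mul_same _, ?_⟩
  rw [Rop]
  set E := Eblock σ₀ α
  set D := fromBlocks (geomMean σ₀ ρ₀⁻¹) 0 0 (0 : Matrix (Fin k) (Fin k) ℂ)
  calc fromBlocks σ₀ α αᴴ (αᴴ * σ₀⁻¹ * α)
      = Eᴴ * fromBlocks σ₀ 0 0 0 * E :=
        (conjTranspose_Eblock_mul_fromBlocks_mul_Eblock α hσ₀.1 hσ₀det).symm
    _ = Eᴴ * (D * fromBlocks ρ₀ 0 0 0 * D) * E := by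
        simp [D, fromBlocks_multiply, hGρG]
    _ = Eᴴ * (D * (E * fromBlocks ρ₀ 0 0 0 * Eᴴ) * D) * E := by
        rw [show E * fromBlocks ρ₀ 0 0 0 * Eᴴ = fromBlocks ρ₀ 0 0 0 from
          fromBlocks_one_mul_fromBlocks_zero_mul_conjTranspose _ _]
    _ = Eᴴ * D * E * fromBlocks ρ₀ 0 0 0 * (Eᴴ * D * E) := by
        simp only [Matrix.mul_assoc]

/-- With `ρ = [[ρ₀,0],[0,0]]` and `σ = [[σ₀,α],[α*,β]]` positive semidefinite,
`ρ₀, σ₀` positive definite, the absolutely continuous part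
`σᵃ = [[σ₀, α],[α*, α* σ₀⁻¹ α]]` satisfies `σᵃ = R ρ R` with the positive semidefinite
`R = E* [[σ₀ # ρ₀⁻¹, 0],[0,0]] E`, `E = [[I, σ₀⁻¹ α],[0, I]]`; in particular `σᵃ ≪ ρ`. -/
theorem ac_part_eq_conj {m k : ℕ}
    (ρ₀ σ₀ : Matrix (Fin m) (Fin m) ℂ) (α : Matrix (Fin m) (Fin k) ℂ)
    (β : Matrix (Fin k) (Fin k) ℂ)
    (hρ₀ : ρ₀.PosDef) (hσ₀ : σ₀.PosDef)
    (hσ : (fromBlocks σ₀ α αᴴ β).PosSemidef) :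
    (Rop ρ₀ σ₀ α).PosSemidef ∧
    fromBlocks σ₀ α αᴴ (αᴴ * σ₀⁻¹ * α) =
      Rop ρ₀ σ₀ α * fromBlocks ρ₀ 0 0 0 * Rop ρ₀ σ₀ α :=
  ac_part_eq_conj_general ρ₀ σ₀ α hρ₀ hσ₀
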